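/- Let 0 ≤ θ < π/2, let A and B be n×n complex matrices in the sector class S_θ, let 0 < m ≤ M with mI ≤ ℜA ≤ MI and mI ≤ ℜB ≤ MI, and let v ∈ [0,1]. Then |det(A∇_vB)| ≤ secⁿθ · Kⁿ · |det(A!_vB)|, where K = (M+m)²/(4mM) and |·| is the complex modulus. (This is the σ = !_v instance of the final clause of the paper's determinant theorem, comparing the arithmetic mean with any mean between !_v and ∇_v.) -/

import Mathlib

open Matrix
open scoped ComplexOrder

/-- The real part `(A + Aᴴ)/2` of a complex matrix. -/
noncomputable def matRe {n : ℕ} (A : Matrix (Fin n) (Fin n) ℂ) : Matrix (Fin n) (Fin n) ℂ :=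
  (2⁻¹ : ℂ) • (A + Aᴴ)

/-- The imaginary part `(A - Aᴴ)/(2i)` of a complex matrix. -/
noncomputable def matIm {n : ℕ} (A : Matrix (Fin n) (Fin n) ℂ) : Matrix (Fin n) (Fin n) ℂ :=
  (2 * Complex.I)⁻¹ • (A - Aᴴ)

/-- Loewner order: `Y - X` is positive semidefinite. -/
def loewnerLE {n : ℕ} (X Y : Matrix (Fin n) (Fin n) ℂ) : Prop := (Y - X).PosSemidef

/-- `A` lies in the sector class `S_θ`: its real part is positive definite and for all `x`,
`|⟨(ℑA)x, x⟩| ≤ tan θ · ⟨(ℜA)x, x⟩`. -/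
def sectorClass {n : ℕ} (θ : ℝ) (A : Matrix (Fin n) (Fin n) ℂ) : Prop :=
  (matRe A).PosDef ∧
    ∀ x : Fin n → ℂ,
      |(star x ⬝ᵥ (matIm A).mulVec x).re| ≤ Real.tan θ * (star x ⬝ᵥ (matRe A).mulVec x).re

/-- The `v`-weighted arithmetic mean `A ∇_v B = v A + (1 - v) B`. -/
noncomputable def amean {n : ℕ} (v : ℝ) (A B : Matrix (Fin n) (Fin n) ℂ) :
    Matrix (Fin n) (Fin n) ℂ :=
  (v : ℂ) • A + ((1 - v : ℝ) : ℂ) • B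

/-- The `v`-weighted harmonic mean `A !_v B = (v A⁻¹ + (1 - v) B⁻¹)⁻¹`. -/
noncomputable def hmean {n : ℕ} (v : ℝ) (A B : Matrix (Fin n) (Fin n) ℂ) :
    Matrix (Fin n) (Fin n) ℂ :=
  ((v : ℂ) • A⁻¹ + ((1 - v : ℝ) : ℂ) • B⁻¹)⁻¹

/-- A linear map on matrices is positive and unital. -/
def IsPosUnitalMap {n : ℕ}
    (Φ : Matrix (Fin n) (Fin n) ℂ →ₗ[ℂ] Matrix (Fin n) (Fin n) ℂ) : Prop :=
  Φ 1 = 1 ∧ ∀ X : Matrix (Fin n) (Fin n) ℂ, X.PosSemidef → (Φ X).PosSemidef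

/-- The numerical radius `ω(A) = sup { |⟨Ax, x⟩| : ‖x‖ = 1 }` (ℓ² norm). -/
noncomputable def numRadius {n : ℕ} (A : Matrix (Fin n) (Fin n) ℂ) : ℝ :=
  sSup {r : ℝ | ∃ x : EuclideanSpace ℂ (Fin n), ‖x‖ = 1 ∧
    r = ‖star (x : Fin n → ℂ) ⬝ᵥ A.mulVec (x : Fin n → ℂ)‖}

/-- The spectral norm (ℓ² → ℓ² operator norm) of a matrix. -/
noncomputable def matSpectralNorm {n : ℕ} (A : Matrix (Fin n) (Fin n) ℂ) : ℝ :=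
  ‖Matrix.toEuclideanCLM (𝕜 := ℂ) A‖

open scoped MatrixOrder ComplexStarModule

/-!
Put `C = A ∇_v B`. For `R > 0` and `S` Hermitian, `det (R + i S) = det R · ∏ⱼ (1 + i μⱼ)`, where
the `μⱼ` are the eigenvalues of the pencil `S - μ R`, hence values of `⟨S y, y⟩ / ⟨R y, y⟩`; so
`det R ≤ |det (R + i S)|`, and sectoriality gives `|μⱼ| ≤ tan θ`. As `S_θ` is convex, this yields
`|det C| ≤ secⁿθ · det ℜC`. The Kantorovich inequality `X + mM X⁻¹ ≤ M + m` for `m ≤ X ≤ M`,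
together with `K H + mM H⁻¹ ≥ M + m` for `H > 0`, gives `ℜC = ℜA ∇_v ℜB ≤ K · (ℜA !_v ℜB)`.
Writing `ℜ(A !_v B) = v PᴴℜA P + (1 - v) QᴴℜB Q` with `v P + (1 - v) Q = 1` and completing the
square shows `ℜA !_v ℜB ≤ ℜ(A !_v B)`; the determinant is monotone on positive definite matrices.
-/

namespace Matrix

variable {ι : Type*} [Fintype ι]

lemma dotProduct_conjTranspose_mul_mul_mulVec (M C : Matrix ι ι ℂ) (x : ι → ℂ) :
    star x ⬝ᵥ (Cᴴ * M * C) *ᵥ x = star (C *ᵥ x) ⬝ᵥ M *ᵥ (C *ᵥ x) := by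
  rw [← mulVec_mulVec, ← mulVec_mulVec, dotProduct_mulVec, ← star_mulVec]

variable [DecidableEq ι]

lemma PosDef.exists_conjTranspose_mul_mul_eq_one {R : Matrix ι ι ℂ} (hR : R.PosDef) :
    ∃ C : Matrix ι ι ℂ, Cᴴ * R * C = 1 := by
  obtain ⟨B, hB, rfl⟩ :=
    CStarAlgebra.isStrictlyPositive_iff_eq_star_mul_self.mp hR.isStrictlyPositive
  have hB' := (isUnit_iff_isUnit_det B).mp hB
  refine ⟨B⁻¹, ?_⟩
  rw [star_eq_conjTranspose, ← mul_assoc, ← conjTranspose_mul, mul_nonsing_inv _ hB',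
    conjTranspose_one, one_mul, mul_nonsing_inv _ hB']

lemma det_add_eq_det_mul_det_one_add {R E C : Matrix ι ι ℂ} (hRC : Cᴴ * R * C = 1) :
    det (R + E) = det R * det (1 + Cᴴ * E * C) := by
  have hR : det (Cᴴ * C) * det R = 1 := by
    rw [det_mul, mul_comm (det Cᴴ), mul_assoc, ← det_mul, mul_comm, ← det_mul, hRC, det_one]
  have hRE : det (Cᴴ * C) * det (R + E) = det (1 + Cᴴ * E * C) := by
    rw [← hRC, det_mul, mul_comm (det Cᴴ), mul_assoc, ← det_mul, mul_comm, ← det_mul,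
      mul_add, add_mul]
  linear_combination det R * hRE - det (R + E) * hR

lemma IsHermitian.det_one_add_smul {T : Matrix ι ι ℂ} (hT : T.IsHermitian) (c : ℂ) :
    det (1 + c • T) = ∏ i, (1 + c * hT.eigenvalues i) := by
  set U := hT.eigenvectorUnitary
  have hdiag : 1 + c • T = (U : Matrix ι ι ℂ) * diagonal (fun i => 1 + c * hT.eigenvalues i) *
      star (U : Matrix ι ι ℂ) := by
    conv_lhs => rw [hT.spectral_theorem, ← map_one (Unitary.conjStarAlgAut ℂ _ U), ← map_smul,
      ← map_add, Unitary.conjStarAlgAut_apply]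
    congr 2
    ext i j
    by_cases hij : i = j <;> simp [hij]
  rw [hdiag, det_mul, det_mul, mul_comm, ← mul_assoc, ← det_mul, Unitary.coe_star_mul_self,
    det_one, one_mul, det_diagonal]

lemma IsHermitian.star_eigenvectorBasis_dotProduct_self {T : Matrix ι ι ℂ} (hT : T.IsHermitian)
    (i : ι) : star ⇑(hT.eigenvectorBasis i) ⬝ᵥ ⇑(hT.eigenvectorBasis i) = 1 := by
  rw [dotProduct_comm, ← EuclideanSpace.inner_eq_star_dotProduct, inner_self_eq_norm_sq_to_K,
    hT.eigenvectorBasis.orthonormal.1 i]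
  simp

lemma PosDef.exists_norm_det_add_I_smul_eq {R S : Matrix ι ι ℂ} (hR : R.PosDef)
    (hS : S.IsHermitian) :
    ∃ μ : ι → ℝ,
      (∀ i, ∃ y, (star y ⬝ᵥ S *ᵥ y).re = μ i ∧ (star y ⬝ᵥ R *ᵥ y).re = 1) ∧
      ‖det (R + Complex.I • S)‖ = ‖det R‖ * ∏ i, √(1 + μ i ^ 2) := by
  obtain ⟨C, hC⟩ := hR.exists_conjTranspose_mul_mul_eq_one
  have hT : (Cᴴ * S * C).IsHermitian := isHermitian_conjTranspose_mul_mul C hS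
  refine ⟨hT.eigenvalues, fun i => ⟨C *ᵥ hT.eigenvectorBasis i, ?_, ?_⟩, ?_⟩
  · rw [← dotProduct_conjTranspose_mul_mul_mulVec, hT.eigenvalues_eq]
    rfl
  · rw [← dotProduct_conjTranspose_mul_mul_mulVec, hC, one_mulVec,
      hT.star_eigenvectorBasis_dotProduct_self, Complex.one_re]
  · rw [det_add_eq_det_mul_det_one_add hC, Matrix.mul_smul, Matrix.smul_mul,
      hT.det_one_add_smul, norm_mul, norm_prod]
    congr 1
    refine Finset.prod_congr rfl fun i _ => ?_
    have h := Complex.norm_add_mul_I 1 (hT.eigenvalues i)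
    rw [one_pow] at h
    rw [← h]
    congr 1
    push_cast
    ring

lemma PosDef.norm_det_le_norm_det_add_I_smul {R S : Matrix ι ι ℂ} (hR : R.PosDef)
    (hS : S.IsHermitian) : ‖det R‖ ≤ ‖det (R + Complex.I • S)‖ := by
  obtain ⟨μ, -, hdet⟩ := hR.exists_norm_det_add_I_smul_eq hS
  rw [hdet]
  refine le_mul_of_one_le_right (norm_nonneg _) (Finset.one_le_prod fun i _ => ?_)
  exact Real.one_le_sqrt.mpr (le_add_of_nonneg_right (sq_nonneg _))

lemma PosDef.norm_det_add_I_smul_le {R S : Matrix ι ι ℂ} (hR : R.PosDef)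
    (hS : S.IsHermitian) {t : ℝ}
    (hsec : ∀ x, |(star x ⬝ᵥ S *ᵥ x).re| ≤ t * (star x ⬝ᵥ R *ᵥ x).re) :
    ‖det (R + Complex.I • S)‖ ≤ √(1 + t ^ 2) ^ Fintype.card ι * ‖det R‖ := by
  obtain ⟨μ, hμ, hdet⟩ := hR.exists_norm_det_add_I_smul_eq hS
  rw [hdet, mul_comm, ← Finset.card_univ, ← Finset.prod_const]
  refine mul_le_mul_of_nonneg_right (Finset.prod_le_prod (fun i _ => by positivity)
    fun i _ => Real.sqrt_le_sqrt ?_) (norm_nonneg _)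
  obtain ⟨y, hSy, hRy⟩ := hμ i
  have h := hsec y
  rw [hSy, hRy, mul_one] at h
  nlinarith [sq_abs (μ i), abs_nonneg (μ i)]

lemma PosDef.norm_det_le_of_le {X Y : Matrix ι ι ℂ} (hX : X.PosDef) (hXY : X ≤ Y) :
    ‖det X‖ ≤ ‖det Y‖ := by
  obtain ⟨C, hC⟩ := hX.exists_conjTranspose_mul_mul_eq_one
  have hW : (Cᴴ * (Y - X) * C).PosSemidef := hXY.conjTranspose_mul_mul_same C
  have hdet := det_add_eq_det_mul_det_one_add (E := Y - X) hC
  rw [add_sub_cancel, ← one_smul ℂ (Cᴴ * (Y - X) * C), hW.isHermitian.det_one_add_smul]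
    at hdet
  rw [hdet, norm_mul, norm_prod]
  refine le_mul_of_one_le_right (norm_nonneg _) (Finset.one_le_prod fun i _ => ?_)
  have hev := hW.eigenvalues_nonneg i
  rw [one_mul, ← Complex.ofReal_one, ← Complex.ofReal_add, Complex.norm_real,
    Real.norm_of_nonneg (by linarith)]
  linarith

lemma norm_det_smul_of_nonneg (X : Matrix ι ι ℂ) {c : ℝ} (hc : 0 ≤ c) :
    ‖det (c • X)‖ = c ^ Fintype.card ι * ‖det X‖ := by
  rw [det_smul_of_tower, norm_smul, Real.norm_of_nonneg (by positivity)]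

lemma PosDef.nonneg_smul_one_add_smul_add_smul_inv {X : Matrix ι ι ℂ} (hX : X.PosDef)
    {a b c : ℝ} (h : ∀ x ∈ spectrum ℝ X, 0 ≤ a + b * x + c * x⁻¹) :
    0 ≤ a • (1 : Matrix ι ι ℂ) + b • X + c • X⁻¹ := by
  have hX' : IsSelfAdjoint X := hX.isHermitian
  have hinv : ContinuousOn (fun x : ℝ => x⁻¹) (spectrum ℝ X) :=
    continuousOn_inv₀.mono fun x hx => (hX.isStrictlyPositive.spectrum_pos hx).ne'
  have hcfc : cfc (fun x => a + b * x + c * x⁻¹) X = a • 1 + b • X + c • X⁻¹ := by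
    rw [cfc_add .., cfc_add .., cfc_const_mul .., cfc_const_mul .., cfc_const a X, cfc_id' ℝ X,
      Algebra.algebraMap_eq_smul_one, nonsing_inv_eq_ringInverse,
      ← cfc_ringInverse_id (R := ℝ) X hX.isUnit]
  exact hcfc ▸ cfc_nonneg h

lemma PosDef.add_smul_inv_le {X : Matrix ι ι ℂ} (hX : X.PosDef) {m M : ℝ}
    (hmX : m • (1 : Matrix ι ι ℂ) ≤ X) (hXM : X ≤ M • (1 : Matrix ι ι ℂ)) :
    X + (m * M) • X⁻¹ ≤ (M + m) • (1 : Matrix ι ι ℂ) := by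
  have hX' : IsSelfAdjoint X := hX.isHermitian
  rw [← Algebra.algebraMap_eq_smul_one, algebraMap_le_iff_le_spectrum] at hmX
  rw [← Algebra.algebraMap_eq_smul_one, le_algebraMap_iff_spectrum_le] at hXM
  have h := hX.nonneg_smul_one_add_smul_add_smul_inv (a := M + m) (b := -1) (c := -(m * M))
    fun x hx => ?_
  · rw [← sub_nonneg]
    convert h using 1
    module
  · have hx0 := hX.isStrictlyPositive.spectrum_pos hx
    have : M + m + -1 * x + -(m * M) * x⁻¹ = (M - x) * (x - m) / x := by
      field_simp
      ring
    rw [this]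
    exact div_nonneg (mul_nonneg (sub_nonneg.mpr (hXM x hx)) (sub_nonneg.mpr (hmX x hx))) hx0.le

lemma PosDef.smul_one_le_smul_add_smul_inv {H : Matrix ι ι ℂ} (hH : H.PosDef) {m M : ℝ}
    (hm : 0 < m) (hM : 0 < M) :
    (M + m) • (1 : Matrix ι ι ℂ) ≤
      ((M + m) ^ 2 / (4 * m * M)) • H + (m * M) • H⁻¹ := by
  have h := hH.nonneg_smul_one_add_smul_add_smul_inv (a := -(M + m))
    (b := (M + m) ^ 2 / (4 * m * M)) (c := m * M) fun x hx => ?_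
  · rw [← sub_nonneg]
    convert h using 1
    module
  · have hx0 := hH.isStrictlyPositive.spectrum_pos hx
    have : -(M + m) + (M + m) ^ 2 / (4 * m * M) * x + m * M * x⁻¹
        = ((M + m) * x - 2 * m * M) ^ 2 / (4 * m * M * x) := by
      field_simp
      ring
    rw [this]
    positivity

lemma PosDef.inv_smul_inv_add_smul_inv_le {Ra Rb P Q : Matrix ι ι ℂ} (hRa : Ra.PosDef)
    (hRb : Rb.PosDef) {v w : ℝ} (hv : 0 ≤ v) (hw : 0 ≤ w)
    (hG : IsUnit (v • Ra⁻¹ + w • Rb⁻¹))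
    (hPQ : v • P + w • Q = 1) :
    (v • Ra⁻¹ + w • Rb⁻¹)⁻¹ ≤ v • (Pᴴ * Ra * P) + w • (Qᴴ * Rb * Q) := by
  set H := (v • Ra⁻¹ + w • Rb⁻¹)⁻¹
  have hH : Hᴴ = H :=
    ((hRa.inv.posSemidef.smul hv).add (hRb.inv.posSemidef.smul hw)).isHermitian.inv.eq
  have expand : ∀ {R X : Matrix ι ι ℂ}, R.PosDef →
      (X - R⁻¹ * H)ᴴ * R * (X - R⁻¹ * H) =
        Xᴴ * R * X - Xᴴ * H - H * X + H * R⁻¹ * H := by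
    intro R X hR
    have hR' : IsUnit R.det := (isUnit_iff_isUnit_det R).mp hR.isUnit
    rw [conjTranspose_sub, conjTranspose_mul, hH, conjTranspose_nonsing_inv, hR.isHermitian.eq]
    simp only [Matrix.sub_mul, Matrix.mul_sub, Matrix.mul_assoc,
      mul_nonsing_inv_cancel_left _ _ hR', nonsing_inv_mul_cancel_left _ _ hR']
    abel
  have hHP : (v • P + w • Q)ᴴ * H = H := by rw [hPQ, conjTranspose_one, Matrix.one_mul]
  have hPH : H * (v • P + w • Q) = H := by rw [hPQ, Matrix.mul_one]
  have hHGH : H * (v • Ra⁻¹ + w • Rb⁻¹) * H = H := by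
    rw [mul_nonsing_inv_cancel_right _ _ ((isUnit_iff_isUnit_det _).mp hG)]
  simp only [conjTranspose_add, conjTranspose_smul, star_trivial, Matrix.add_mul, Matrix.mul_add,
    Matrix.smul_mul, Matrix.mul_smul] at hHP hPH hHGH
  have hsq : v • (Pᴴ * Ra * P) + w • (Qᴴ * Rb * Q) - H =
      v • ((P - Ra⁻¹ * H)ᴴ * Ra * (P - Ra⁻¹ * H)) +
        w • ((Q - Rb⁻¹ * H)ᴴ * Rb * (Q - Rb⁻¹ * H)) := by
    rw [expand hRa, expand hRb]
    linear_combination (norm := module) hHP + hPH - hHGH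
  rw [le_iff, hsq]
  exact ((hRa.posSemidef.conjTranspose_mul_mul_same _).smul hv).add
    ((hRb.posSemidef.conjTranspose_mul_mul_same _).smul hw)

end Matrix

section Sector

variable {n : ℕ}

lemma matRe_eq_realPart (A : Matrix (Fin n) (Fin n) ℂ) : matRe A = ℜ A := by
  rw [realPart_apply_coe, matRe, ← Complex.coe_smul, star_eq_conjTranspose]
  norm_num

lemma matIm_eq_imaginaryPart (A : Matrix (Fin n) (Fin n) ℂ) : matIm A = ℑ A := by
  rw [imaginaryPart_apply_coe, matIm, ← Complex.coe_smul, star_eq_conjTranspose, smul_smul]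
  congr 1
  rw [mul_inv, Complex.inv_I]
  push_cast
  ring

lemma matIm_isHermitian (A : Matrix (Fin n) (Fin n) ℂ) : (matIm A).IsHermitian := by
  rw [matIm_eq_imaginaryPart]
  exact (ℑ A).2

lemma matRe_add_I_smul_matIm (A : Matrix (Fin n) (Fin n) ℂ) :
    matRe A + Complex.I • matIm A = A := by
  rw [matRe_eq_realPart, matIm_eq_imaginaryPart, realPart_add_I_smul_imaginaryPart]

lemma amean_eq_smul_add_smul (v : ℝ) (A B : Matrix (Fin n) (Fin n) ℂ) :
    amean v A B = v • A + (1 - v) • B := by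
  simp only [amean, Complex.coe_smul]

lemma hmean_eq_inv_amean_inv (v : ℝ) (A B : Matrix (Fin n) (Fin n) ℂ) :
    hmean v A B = (amean v A⁻¹ B⁻¹)⁻¹ :=
  rfl

lemma matRe_amean (v : ℝ) (A B : Matrix (Fin n) (Fin n) ℂ) :
    matRe (amean v A B) = amean v (matRe A) (matRe B) := by
  simp [matRe_eq_realPart, amean_eq_smul_add_smul]

lemma matIm_amean (v : ℝ) (A B : Matrix (Fin n) (Fin n) ℂ) :
    matIm (amean v A B) = amean v (matIm A) (matIm B) := by
  simp [matIm_eq_imaginaryPart, amean_eq_smul_add_smul]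

lemma matRe_inv {X : Matrix (Fin n) (Fin n) ℂ} (hX : IsUnit X) :
    matRe X⁻¹ = (X⁻¹)ᴴ * matRe X * X⁻¹ := by
  have hX' := (isUnit_iff_isUnit_det X).mp hX
  rw [matRe, matRe, Matrix.mul_smul, Matrix.smul_mul, Matrix.mul_add, Matrix.add_mul,
    mul_nonsing_inv_cancel_right _ _ hX', ← conjTranspose_mul, mul_nonsing_inv _ hX',
    conjTranspose_one, Matrix.one_mul, add_comm (X⁻¹ᴴ)]

lemma isUnit_of_posDef_matRe {X : Matrix (Fin n) (Fin n) ℂ} (h : (matRe X).PosDef) :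
    IsUnit X := by
  rw [isUnit_iff_isUnit_det, isUnit_iff_ne_zero]
  intro h0
  obtain ⟨x, hx, hXx⟩ := exists_mulVec_eq_zero_iff.mpr h0
  have hpos := h.dotProduct_mulVec_pos hx
  rw [matRe, smul_mulVec, add_mulVec, hXx, zero_add, dotProduct_smul, dotProduct_mulVec,
    ← star_mulVec, hXx] at hpos
  simp at hpos

lemma posDef_matRe_inv {X : Matrix (Fin n) (Fin n) ℂ} (h : (matRe X).PosDef) :
    (matRe X⁻¹).PosDef := by
  have hX := isUnit_of_posDef_matRe h
  rw [matRe_inv hX]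
  exact h.conjTranspose_mul_mul_same (mulVec_injective_of_isUnit (isUnit_nonsing_inv_iff.mpr hX))

lemma Matrix.PosDef.amean {X Y : Matrix (Fin n) (Fin n) ℂ} (hX : X.PosDef) (hY : Y.PosDef)
    {v : ℝ} (hv0 : 0 ≤ v) (hv1 : v ≤ 1) : (amean v X Y).PosDef := by
  rw [amean_eq_smul_add_smul]
  rcases hv0.eq_or_lt with rfl | hv
  · simpa using hY
  · exact (hX.smul hv).add_posSemidef (hY.posSemidef.smul (sub_nonneg.mpr hv1))

lemma Matrix.PosDef.hmean {X Y : Matrix (Fin n) (Fin n) ℂ} (hX : X.PosDef) (hY : Y.PosDef)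
    {v : ℝ} (hv0 : 0 ≤ v) (hv1 : v ≤ 1) : (hmean v X Y).PosDef :=
  hmean_eq_inv_amean_inv v X Y ▸ (hX.inv.amean hY.inv hv0 hv1).inv

lemma sectorClass_amean {θ v : ℝ} {A B : Matrix (Fin n) (Fin n) ℂ} (hA : sectorClass θ A)
    (hB : sectorClass θ B) (hv0 : 0 ≤ v) (hv1 : v ≤ 1) : sectorClass θ (amean v A B) := by
  refine ⟨matRe_amean v A B ▸ hA.1.amean hB.1 hv0 hv1, fun x => ?_⟩
  have hquad : ∀ S T : Matrix (Fin n) (Fin n) ℂ, (star x ⬝ᵥ amean v S T *ᵥ x).re =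
      v * (star x ⬝ᵥ S *ᵥ x).re + (1 - v) * (star x ⬝ᵥ T *ᵥ x).re := by
    intro S T
    simp [amean_eq_smul_add_smul, add_mulVec, smul_mulVec]
  rw [matRe_amean, matIm_amean, hquad, hquad]
  refine (abs_add_le _ _).trans ?_
  rw [abs_mul, abs_mul, abs_of_nonneg hv0, abs_of_nonneg (sub_nonneg.mpr hv1)]
  linarith [mul_le_mul_of_nonneg_left (hA.2 x) hv0,
    mul_le_mul_of_nonneg_left (hB.2 x) (sub_nonneg.mpr hv1)]

lemma sectorClass.norm_det_le {θ : ℝ} {A : Matrix (Fin n) (Fin n) ℂ} (hA : sectorClass θ A)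
    (hcos : 0 < Real.cos θ) : ‖A.det‖ ≤ (Real.cos θ)⁻¹ ^ n * ‖(matRe A).det‖ := by
  have h := hA.1.norm_det_add_I_smul_le (matIm_isHermitian A) hA.2
  rw [matRe_add_I_smul_matIm, Fintype.card_fin] at h
  rwa [← Real.inv_sqrt_one_add_tan_sq hcos, inv_inv]

lemma norm_det_matRe_le {X : Matrix (Fin n) (Fin n) ℂ} (h : (matRe X).PosDef) :
    ‖(matRe X).det‖ ≤ ‖X.det‖ := by
  have h' := h.norm_det_le_norm_det_add_I_smul (matIm_isHermitian X)
  rwa [matRe_add_I_smul_matIm] at h'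

lemma amean_le_smul_hmean {X Y : Matrix (Fin n) (Fin n) ℂ} (hX : X.PosDef) (hY : Y.PosDef)
    {m M : ℝ} (hm : 0 < m) (hM : 0 < M)
    (hmX : m • (1 : Matrix (Fin n) (Fin n) ℂ) ≤ X) (hXM : X ≤ M • 1)
    (hmY : m • (1 : Matrix (Fin n) (Fin n) ℂ) ≤ Y) (hYM : Y ≤ M • 1)
    {v : ℝ} (hv0 : 0 ≤ v) (hv1 : v ≤ 1) :
    amean v X Y ≤ ((M + m) ^ 2 / (4 * m * M)) • hmean v X Y := by
  set G := amean v X⁻¹ Y⁻¹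
  have hG : G.PosDef := hX.inv.amean hY.inv hv0 hv1
  have hle : amean v X Y + (m * M) • G ≤ (M + m) • (1 : Matrix (Fin n) (Fin n) ℂ) :=
    calc amean v X Y + (m * M) • G
        = v • (X + (m * M) • X⁻¹) + (1 - v) • (Y + (m * M) • Y⁻¹) := by
          simp only [G, amean_eq_smul_add_smul]
          module
      _ ≤ v • ((M + m) • 1) + (1 - v) • ((M + m) • 1) :=
          add_le_add (smul_le_smul_of_nonneg_left (hX.add_smul_inv_le hmX hXM) hv0)
            (smul_le_smul_of_nonneg_left (hY.add_smul_inv_le hmY hYM) (sub_nonneg.mpr hv1))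
      _ = (M + m) • 1 := by module
  have hge := hG.inv.smul_one_le_smul_add_smul_inv hm hM
  rw [nonsing_inv_nonsing_inv G ((isUnit_iff_isUnit_det G).mp hG.isUnit)] at hge
  rw [hmean_eq_inv_amean_inv]
  exact le_of_add_le_add_right (hle.trans hge)

lemma hmean_matRe_le_matRe_hmean {A B : Matrix (Fin n) (Fin n) ℂ} (hA : (matRe A).PosDef)
    (hB : (matRe B).PosDef) {v : ℝ} (hv0 : 0 ≤ v) (hv1 : v ≤ 1) :
    hmean v (matRe A) (matRe B) ≤ matRe (hmean v A B) := by
  set D := amean v A⁻¹ B⁻¹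
  have hD : IsUnit D :=
    isUnit_of_posDef_matRe
      (matRe_amean v _ _ ▸ (posDef_matRe_inv hA).amean (posDef_matRe_inv hB) hv0 hv1)
  have hPQ : v • (A⁻¹ * D⁻¹) + (1 - v) • (B⁻¹ * D⁻¹) = 1 := by
    rw [← Matrix.smul_mul, ← Matrix.smul_mul, ← Matrix.add_mul, ← amean_eq_smul_add_smul,
      mul_nonsing_inv _ ((isUnit_iff_isUnit_det D).mp hD)]
  have hRe : matRe (hmean v A B) = v • ((A⁻¹ * D⁻¹)ᴴ * matRe A * (A⁻¹ * D⁻¹)) +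
      (1 - v) • ((B⁻¹ * D⁻¹)ᴴ * matRe B * (B⁻¹ * D⁻¹)) := by
    rw [hmean_eq_inv_amean_inv, matRe_inv hD, matRe_amean, amean_eq_smul_add_smul,
      matRe_inv (isUnit_of_posDef_matRe hA), matRe_inv (isUnit_of_posDef_matRe hB)]
    simp only [Matrix.mul_add, Matrix.add_mul, Matrix.mul_smul, Matrix.smul_mul,
      conjTranspose_mul, Matrix.mul_assoc]
  have hG := (hA.inv.amean hB.inv hv0 hv1).isUnit
  rw [amean_eq_smul_add_smul] at hG
  rw [hRe, hmean_eq_inv_amean_inv, amean_eq_smul_add_smul]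
  exact hA.inv_smul_inv_add_smul_inv_le hB hv0 (sub_nonneg.mpr hv1) hG hPQ

end Sector

theorem stmt10 {n : ℕ} (θ : ℝ) (hθ0 : 0 ≤ θ) (hθ1 : θ < Real.pi / 2)
    (A B : Matrix (Fin n) (Fin n) ℂ)
    (hA : sectorClass θ A) (hB : sectorClass θ B)
    (m M : ℝ) (hm : 0 < m) (hmM : m ≤ M)
    (hmA : loewnerLE (m • (1 : Matrix (Fin n) (Fin n) ℂ)) (matRe A))
    (hAM : loewnerLE (matRe A) (M • (1 : Matrix (Fin n) (Fin n) ℂ)))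
    (hmB : loewnerLE (m • (1 : Matrix (Fin n) (Fin n) ℂ)) (matRe B))
    (hBM : loewnerLE (matRe B) (M • (1 : Matrix (Fin n) (Fin n) ℂ)))
    (v : ℝ) (hv0 : 0 ≤ v) (hv1 : v ≤ 1) :
    ‖(amean v A B).det‖ ≤
      (Real.cos θ)⁻¹ ^ n * ((M + m) ^ 2 / (4 * m * M)) ^ n * ‖(hmean v A B).det‖ := by
  have hM : 0 < M := hm.trans_le hmM
  have hcos : 0 < Real.cos θ := Real.cos_pos_of_mem_Ioo ⟨by linarith [Real.pi_pos], hθ1⟩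
  have hK : 0 ≤ (M + m) ^ 2 / (4 * m * M) := by positivity
  have hH : (hmean v (matRe A) (matRe B)).PosDef := hA.1.hmean hB.1 hv0 hv1
  have hHle := hmean_matRe_le_matRe_hmean hA.1 hB.1 hv0 hv1
  have hReH : (matRe (hmean v A B)).PosDef := by
    simpa using hH.add_posSemidef hHle
  calc ‖(amean v A B).det‖
      ≤ (Real.cos θ)⁻¹ ^ n * ‖(matRe (amean v A B)).det‖ :=
        (sectorClass_amean hA hB hv0 hv1).norm_det_le hcos
    _ ≤ (Real.cos θ)⁻¹ ^ n * (((M + m) ^ 2 / (4 * m * M)) ^ n *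
          ‖(hmean v (matRe A) (matRe B)).det‖) := by
        gcongr
        have hle := (sectorClass_amean hA hB hv0 hv1).1.norm_det_le_of_le
          (matRe_amean v A B ▸ amean_le_smul_hmean hA.1 hB.1 hm hM hmA hAM hmB hBM hv0 hv1)
        rwa [Matrix.norm_det_smul_of_nonneg _ hK, Fintype.card_fin] at hle
    _ ≤ (Real.cos θ)⁻¹ ^ n * (((M + m) ^ 2 / (4 * m * M)) ^ n *
          ‖(hmean v A B).det‖) := by
        gcongr
        exact (hH.norm_det_le_of_le hHle).trans (norm_det_matRe_le hReH)
    _ = _ := by ring
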